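/- Let 𝔄 be a set with a reflexive symmetric binary relation 'linked' such that each element is linked to at most L elements. Define C_L = ln L + L². Then for any finite family α = {(T₁,n₁),…,(T_m,n_m)} of distinct elements T_i with multiplicities n_i ≥ 1, writing υ(T_i) = ∑_{j : T_j linked to T_i} n_j, we have C_L ∑_{i=1}^m n_i + ∑_{i=1}^m n_i ln n_i > ∑_{i=1}^m n_i ln υ(T_i). -/
import Mathlib


open Finset

open Classical in
theorem estimation_theorem {𝔄 : Type*} (linked : 𝔄 → 𝔄 → Prop)
    (hrefl : ∀ A, linked A A) (hsymm : ∀ A B, linked A B → linked B A)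
    (L : ℕ) (hL : 1 ≤ L)
    (hbound : ∀ A : 𝔄, {B | linked A B}.Finite ∧ Nat.card {B | linked A B} ≤ L)
    (m : ℕ) (hm : 1 ≤ m) (T : Fin m → 𝔄) (hT : Function.Injective T)
    (n : Fin m → ℕ) (hn : ∀ i, 1 ≤ n i) :
    (∑ i, (Real.log L + (L : ℝ) ^ 2) * (n i : ℝ)) + ∑ i, (n i : ℝ) * Real.log (n i) >
      ∑ i, (n i : ℝ) *
        Real.log (∑ j ∈ Finset.univ.filter (fun j => linked (T j) (T i)), (n j : ℝ)) := by
  have hLpos : (0:ℝ) < L := by exact_mod_cast hL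
  set u : Fin m → ℝ := fun i =>
    ∑ j ∈ Finset.univ.filter (fun j => linked (T j) (T i)), (n j : ℝ) with hu
  have hnpos : ∀ i, (0:ℝ) < n i := fun i => by exact_mod_cast hn i
  have hule : ∀ i, (n i : ℝ) ≤ u i := by
    intro i
    apply Finset.single_le_sum (f := fun j => (n j : ℝ)) (fun j _ => by positivity)
    simp [hrefl]
  have hupos : ∀ i, (0:ℝ) < u i := fun i => lt_of_lt_of_le (hnpos i) (hule i)
  -- per-term bound
  have key : ∀ i, (n i : ℝ) * Real.log (u i) ≤
      (n i : ℝ) * Real.log L + (n i : ℝ) * Real.log (n i) + (u i / L - (n i : ℝ)) := by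
    intro i
    have hn0 : ((n i : ℝ)) ≠ 0 := ne_of_gt (hnpos i)
    have hL0 : ((L : ℝ)) ≠ 0 := ne_of_gt hLpos
    have h1 : Real.log (u i / ((L:ℝ) * n i)) ≤ u i / ((L:ℝ) * n i) - 1 :=
      Real.log_le_sub_one_of_pos (div_pos (hupos i) (mul_pos hLpos (hnpos i)))
    have h2 : Real.log (u i / ((L:ℝ) * n i)) =
        Real.log (u i) - (Real.log L + Real.log (n i)) := by
      rw [Real.log_div (ne_of_gt (hupos i)) (mul_ne_zero hL0 hn0),
        Real.log_mul hL0 hn0]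
    have h3 : Real.log (u i) ≤ Real.log L + Real.log (n i) + (u i / ((L:ℝ) * n i) - 1) := by
      linarith [h1, h2.symm.le, h2.le]
    have h4 := mul_le_mul_of_nonneg_left h3 (le_of_lt (hnpos i))
    have h5 : (n i : ℝ) * (u i / ((L:ℝ) * n i)) = u i / L := by
      field_simp
    nlinarith [h4, h5]
  -- card bound
  have hcard : ∀ j, ((Finset.univ.filter (fun i => linked (T j) (T i))).card : ℝ) ≤ L := by
    intro j
    obtain ⟨hfin, hle⟩ := hbound (T j)
    have h1 : (Finset.univ.filter (fun i => linked (T j) (T i))).card ≤ hfin.toFinset.card := by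
      apply Finset.card_le_card_of_injOn T
      · intro i hi
        simpa using hi
      · exact fun a _ b _ h => hT h
    have h2 : Nat.card {B | linked (T j) B} = hfin.toFinset.card := by
      rw [Nat.card_coe_set_eq, Set.ncard_eq_toFinset_card _ hfin]
    exact_mod_cast h1.trans (le_of_le_of_eq (le_of_eq rfl) rfl) |>.trans (h2 ▸ hle)
  -- double counting
  have hsum : ∑ i, u i ≤ (L:ℝ) * ∑ i, (n i : ℝ) := by
    have heq : ∑ i, u i = ∑ j, ((Finset.univ.filter (fun i => linked (T j) (T i))).card : ℝ) * (n j : ℝ) := by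
      simp only [hu, Finset.sum_filter]
      rw [Finset.sum_comm]
      refine Finset.sum_congr rfl fun j _ => ?_
      rw [← Finset.sum_filter, Finset.sum_const, nsmul_eq_mul]
    rw [heq, Finset.mul_sum]
    apply Finset.sum_le_sum
    intro j _
    exact mul_le_mul_of_nonneg_right (hcard j) (le_of_lt (hnpos j))
  -- assemble
  have hsumdiv : (∑ i, (u i / L - (n i : ℝ))) ≤ 0 := by
    rw [Finset.sum_sub_distrib, ← Finset.sum_div]
    rw [sub_nonpos, div_le_iff₀ hLpos]
    calc ∑ i, u i ≤ (L:ℝ) * ∑ i, (n i : ℝ) := hsum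
    _ = (∑ i, (n i : ℝ)) * L := by ring
  have hNpos : (0:ℝ) < ∑ i, (n i : ℝ) := by
    have : (0:Fin m → ℝ) ≠ fun i => (n i : ℝ) := by
      have : Nonempty (Fin m) := ⟨⟨0, hm⟩⟩
      intro h; have := congrFun h (Classical.arbitrary (Fin m))
      simp at this
      linarith [hnpos (Classical.arbitrary (Fin m))]
    apply Finset.sum_pos (fun i _ => hnpos i)
    exact ⟨⟨0, hm⟩, Finset.mem_univ _⟩
  have hmain : ∑ i, (n i : ℝ) * Real.log (u i) ≤
      Real.log L * (∑ i, (n i : ℝ)) + ∑ i, (n i : ℝ) * Real.log (n i) := by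
    calc ∑ i, (n i : ℝ) * Real.log (u i)
        ≤ ∑ i, ((n i : ℝ) * Real.log L + (n i : ℝ) * Real.log (n i) + (u i / L - (n i : ℝ))) :=
          Finset.sum_le_sum fun i _ => key i
      _ = (∑ i, (n i : ℝ) * Real.log L) + (∑ i, (n i : ℝ) * Real.log (n i))
            + ∑ i, (u i / L - (n i : ℝ)) := by
          rw [Finset.sum_add_distrib, Finset.sum_add_distrib]
      _ ≤ Real.log L * (∑ i, (n i : ℝ)) + ∑ i, (n i : ℝ) * Real.log (n i) := by
          have he : (∑ i, (n i : ℝ) * Real.log L) = Real.log L * ∑ i, (n i : ℝ) := by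
            rw [Finset.mul_sum]
            exact Finset.sum_congr rfl fun i _ => mul_comm _ _
          linarith
  have hfirst : ∑ i, (Real.log L + (L : ℝ) ^ 2) * (n i : ℝ)
      = (Real.log L + (L:ℝ)^2) * ∑ i, (n i : ℝ) := by rw [Finset.mul_sum]
  have hL2 : (0:ℝ) < (L:ℝ)^2 * ∑ i, (n i : ℝ) := by positivity
  rw [hfirst]
  calc ∑ i, (n i : ℝ) * Real.log (u i)
      ≤ Real.log L * (∑ i, (n i : ℝ)) + ∑ i, (n i : ℝ) * Real.log (n i) := hmain
    _ < (Real.log L + (L:ℝ)^2) * (∑ i, (n i : ℝ)) + ∑ i, (n i : ℝ) * Real.log (n i) := by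
        nlinarith
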